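/- arXiv:math/0610503 — 2 statements merged into one kernel-verified Lean document; each statement's English description precedes it below -/
import Mathlib

section
/- Let M be a compact length space and let γ be a closed geodesic of length l parameterized by arc length. If γ is distance minimizing on every segment of length l/2 (i.e., γ is a 1/2-geodesic), then γ has no self-intersection: γ restricted to [0, l) is injective. -/
/-- Let `M` be a compact length space (here: a compact metric space) and
`γ : ℝ → M` a closed geodesic of length `l > 0`, parameterized by arc length and `l`-periodic.
If `γ` is distance minimizing on every segment of length `l/2` (a `1/2`-geodesic),
then `γ` has no self-intersection: `γ` is injective on `[0, l)`.

Being a `1/2`-geodesic (minimizing on every subsegment of length `l/2`, hence on every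
shorter subsegment as well, since `γ` is parameterized by arc length) is encoded as:
`dist (γ s) (γ t) = t - s` whenever `s ≤ t ≤ s + l/2`. -/
theorem no_self_intersection_of_half_geodesic
    {M : Type*} [MetricSpace M] [CompactSpace M]
    (l : ℝ) (hl : 0 < l) (γ : ℝ → M)
    (hper : ∀ t : ℝ, γ (t + l) = γ t)
    (hmin : ∀ s t : ℝ, s ≤ t → t ≤ s + l / 2 → dist (γ s) (γ t) = t - s) :
    Set.InjOn γ (Set.Ico 0 l) := by
  -- It suffices to treat the case `s ≤ t`.
  have key : ∀ s ∈ Set.Ico 0 l, ∀ t ∈ Set.Ico 0 l, s ≤ t → γ s = γ t → s = t := by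
    rintro s ⟨hs0, hsl⟩ t ⟨ht0, htl⟩ hst heq
    have hd : dist (γ s) (γ t) = 0 := by rw [heq, dist_self]
    by_cases h : t ≤ s + l / 2
    · have := hmin s t hst h
      linarith [this ▸ hd]
    · push_neg at h
      have h1 : t ≤ s + l := by linarith
      have h2 : s + l ≤ t + l / 2 := by linarith
      have := hmin t (s + l) h1 h2
      rw [hper s, heq.symm, dist_self] at this
      linarith
  intro s hs t ht heq
  rcases le_total s t with h | h
  · exact key s hs t ht h heq
  · exact (key t ht s hs h heq.symm).symm
end

section
/- On a surface of revolution in ℝ³ generated by revolving a regular profile curve about the x-axis, along any geodesic γ the quantity r(t)·cos(θ(t)) is constant, where r(t) is the distance from γ(t) to the axis of revolution and θ(t) is the angle between γ'(t) and the parallel circle through γ(t) (Clairaut's relation). -/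
/-! The rotational symmetry of the metric `ds² + f(s)² dφ²` makes `φ` a cyclic coordinate,
so its conjugate momentum `f(s)² φ'` is conserved: differentiating it and substituting the
second geodesic equation gives zero. Since `f(s) φ'` is the cosine of the angle with the
parallel, this momentum is exactly `r cos θ`. -/

theorem hasDerivAt_angularMomentum_eq_zero {f s φ : ℝ → ℝ} {t : ℝ}
    (hf : DifferentiableAt ℝ f (s t)) (hs : DifferentiableAt ℝ s t)
    (hφ : DifferentiableAt ℝ (deriv φ) t)
    (hgeo : f (s t) * deriv (deriv φ) t = -2 * deriv f (s t) * deriv s t * deriv φ t) :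
    HasDerivAt (fun t => f (s t) * (f (s t) * deriv φ t)) 0 t := by
  have hfs : HasDerivAt (fun t => f (s t)) (deriv f (s t) * deriv s t) t :=
    hf.hasDerivAt.comp t hs.hasDerivAt
  refine (hfs.mul (hfs.mul hφ.hasDerivAt)).congr_deriv ?_
  simp only [Pi.mul_apply]
  linear_combination f (s t) * hgeo

theorem clairaut_relation_general
    (f : ℝ → ℝ) (hf : ContDiff ℝ 2 f)
    (s φ : ℝ → ℝ) (hs : ContDiff ℝ 2 s) (hφ : ContDiff ℝ 2 φ)
    (hgeo₂ : ∀ t, f (s t) * deriv (deriv φ) t = -2 * deriv f (s t) * deriv s t * deriv φ t) :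
    ∀ t₁ t₂ : ℝ,
      f (s t₁) * (f (s t₁) * deriv φ t₁) = f (s t₂) * (f (s t₂) * deriv φ t₂) := by
  have hconst (t : ℝ) : HasDerivAt (fun t => f (s t) * (f (s t) * deriv φ t)) 0 t :=
    hasDerivAt_angularMomentum_eq_zero (hf.differentiable two_ne_zero _)
      (hs.differentiable two_ne_zero t) (hφ.differentiable_deriv_two t) (hgeo₂ t)
  exact is_const_of_deriv_eq_zero (fun t => (hconst t).differentiableAt) (fun t => (hconst t).deriv)

/-- **Clairaut's relation.** On a surface of revolution with induced metric
`ds² + f(s)² dφ²` (profile curve at distance `f(s) > 0` from the axis, parameterized by arc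
length), let `γ(t) = (s(t), φ(t))` be a unit-speed geodesic, i.e. a solution of the geodesic
equations
  `s'' = f(s) f'(s) (φ')²`,  `f(s) φ'' = -2 f'(s) s' φ'`,
with `(s')² + f(s)² (φ')² = 1`.  The radius of the parallel through `γ(t)` is `r(t) = f(s t)`
and the cosine of the angle `θ(t)` between `γ'(t)` and that parallel is `f(s t) * φ'(t)`.
Then the quantity `r(t) · cos θ(t) = f(s t) * (f(s t) * φ'(t))` is constant along `γ`. -/
theorem clairaut_relation
    (f : ℝ → ℝ) (hf : ContDiff ℝ 2 f) (hfpos : ∀ x, 0 < f x)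
    (s φ : ℝ → ℝ) (hs : ContDiff ℝ 2 s) (hφ : ContDiff ℝ 2 φ)
    (hgeo₁ : ∀ t, deriv (deriv s) t = f (s t) * deriv f (s t) * (deriv φ t) ^ 2)
    (hgeo₂ : ∀ t, f (s t) * deriv (deriv φ) t = -2 * deriv f (s t) * deriv s t * deriv φ t)
    (hunit : ∀ t, (deriv s t) ^ 2 + (f (s t)) ^ 2 * (deriv φ t) ^ 2 = 1) :
    ∀ t₁ t₂ : ℝ,
      f (s t₁) * (f (s t₁) * deriv φ t₁) = f (s t₂) * (f (s t₂) * deriv φ t₂) :=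
  clairaut_relation_general f hf s φ hs hφ hgeo₂
end
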